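/- arXiv:2204.03563 — 3 statements merged into one kernel-verified Lean document; each statement's English description precedes it below -/
import Mathlib

section
/- Fix an ordinal α, and for ordinals δ ≥ 1, β > 1 let log_β δ denote the unique ordinal γ with β^γ ≤ δ < β^(γ+1). Then for any ordinals β, γ ≥ 1: β·ℵ_α ≤ γ if and only if log_{ℵ_α} β < log_{ℵ_α} γ, where in addition ¬(β ∼_α γ) ∧ β < γ is equivalent to β·ℵ_α ≤ γ. -/
/-!
Write `A = ℵ_α` as an ordinal. Since `A` is closed under ordinal multiplication and a limit,
every `β < A ^ (l + 1) = A ^ l * A` lies below some `A ^ l * q` with `0 < q < A`, and `q * A = A`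
gives `β * A ≤ A ^ (l + 1)`. So `β * A ≤ γ` exactly when `γ` reaches the next power of `A`
above `β`, i.e. when `log_A β < log_A γ`.
-/

namespace Ordinal

theorem mul_le_opow_add_one_of_lt {A β l : Ordinal} (hA : IsPrincipal (· * ·) A) (hA₂ : 2 < A)
    (h : β < A ^ (l + 1)) : β * A ≤ A ^ (l + 1) := by
  rw [opow_add_one] at h ⊢
  obtain ⟨q, hqA, hβq⟩ :=
    (lt_mul_iff_of_isSuccLimit (isSuccLimit_of_isPrincipal_mul hA₂ hA)).1 h
  have hq : 0 < q := by
    rw [pos_iff_ne_zero]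
    rintro rfl
    simp at hβq
  calc β * A ≤ A ^ l * q * A := mul_le_mul_left hβq.le A
    _ = A ^ l * A := by rw [mul_assoc, isPrincipal_mul_iff_mul_left_eq.1 hA q hq hqA]

theorem mul_le_iff_lt_of_opow_bounds {A β γ lb lg : Ordinal} (hA : IsPrincipal (· * ·) A)
    (hA₂ : 2 < A) (hlb1 : A ^ lb ≤ β) (hlb2 : β < A ^ (lb + 1)) (hlg1 : A ^ lg ≤ γ)
    (hlg2 : γ < A ^ (lg + 1)) : β * A ≤ γ ↔ lb < lg := by
  have hA₁ : 1 < A := one_lt_two.trans hA₂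
  constructor
  · intro h
    have hpow : A ^ (lb + 1) < A ^ (lg + 1) :=
      calc A ^ (lb + 1) = A ^ lb * A := opow_add_one A lb
        _ ≤ β * A := mul_le_mul_left hlb1 A
        _ ≤ γ := h
        _ < A ^ (lg + 1) := hlg2
    exact Order.succ_lt_succ_iff.1 ((opow_lt_opow_iff_right hA₁).1 hpow)
  · intro h
    calc β * A ≤ A ^ (lb + 1) := mul_le_opow_add_one_of_lt hA hA₂ hlb2
      _ ≤ A ^ lg := opow_le_opow_right (zero_lt_one.trans hA₁) (Order.add_one_le_of_lt h)
      _ ≤ γ := hlg1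

/-- The relation `β ∼_α γ`, with `A = ℵ_α` as an ordinal. -/
def MulComparable (A β γ : Ordinal) : Prop :=
  β < γ * A ∧ γ < β * A

theorem not_mulComparable_and_lt_iff {A β γ : Ordinal} (hA : 1 < A) (hβ : 0 < β) :
    (¬MulComparable A β γ ∧ β < γ) ↔ β * A ≤ γ := by
  constructor
  · rintro ⟨hn, hlt⟩
    by_contra hcon
    exact hn ⟨hlt.trans_le (le_mul_left γ (zero_lt_one.trans hA)), not_le.1 hcon⟩
  · intro h
    exact ⟨fun hc => h.not_gt hc.2, (lt_mul_of_one_lt_right hβ hA).trans_le h⟩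

end Ordinal

open Ordinal in
theorem class_lt_iff_log_lt_general (α β γ lb lg : Ordinal)
    (hlb1 : (Cardinal.aleph α).ord ^ lb ≤ β) (hlb2 : β < (Cardinal.aleph α).ord ^ (lb + 1))
    (hlg1 : (Cardinal.aleph α).ord ^ lg ≤ γ) (hlg2 : γ < (Cardinal.aleph α).ord ^ (lg + 1)) :
    (β * (Cardinal.aleph α).ord ≤ γ ↔ lb < lg) ∧
    ((¬(β < γ * (Cardinal.aleph α).ord ∧ γ < β * (Cardinal.aleph α).ord) ∧ β < γ) ↔
      β * (Cardinal.aleph α).ord ≤ γ) := by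
  have hA : IsPrincipal (· * ·) (Cardinal.aleph α).ord :=
    isPrincipal_mul_ord (Cardinal.aleph0_le_aleph α)
  have hA₂ : 2 < (Cardinal.aleph α).ord :=
    (natCast_lt_omega0 2).trans_le (Cardinal.omega0_le_ord.2 (Cardinal.aleph0_le_aleph α))
  have hβ : 0 < β := (opow_pos lb (zero_lt_two.trans hA₂)).trans_le hlb1
  exact ⟨mul_le_iff_lt_of_opow_bounds hA hA₂ hlb1 hlb2 hlg1 hlg2,
    not_mulComparable_and_lt_iff (one_lt_two.trans hA₂) hβ⟩

theorem class_lt_iff_log_lt (α β γ lb lg : Ordinal) (hβ : 1 ≤ β) (hγ : 1 ≤ γ)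
    (hlb1 : (Cardinal.aleph α).ord ^ lb ≤ β) (hlb2 : β < (Cardinal.aleph α).ord ^ (lb + 1))
    (hlg1 : (Cardinal.aleph α).ord ^ lg ≤ γ) (hlg2 : γ < (Cardinal.aleph α).ord ^ (lg + 1)) :
    (β * (Cardinal.aleph α).ord ≤ γ ↔ lb < lg) ∧
    ((¬(β < γ * (Cardinal.aleph α).ord ∧ γ < β * (Cardinal.aleph α).ord) ∧ β < γ) ↔
      β * (Cardinal.aleph α).ord ≤ γ) :=
  class_lt_iff_log_lt_general α β γ lb lg hlb1 hlb2 hlg1 hlg2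
end

section
/- Fix an ordinal α. For any ordinals β, γ ≥ 1, the following are equivalent: (1) ¬(β ∼_α γ) and β < γ; (2) β·ℵ_α ≤ γ; where β ∼_α γ means β < γ·ℵ_α and γ < β·ℵ_α. -/
namespace Ordinal

theorem one_lt_ord_aleph (α : Ordinal) : 1 < (Cardinal.aleph α).ord :=
  one_lt_omega0.trans_le (Cardinal.omega0_le_ord.2 (Cardinal.aleph0_le_aleph α))

-- Once `β < γ`, the half `β < γ * o` of the equivalence holds automatically.
theorem not_mutually_lt_mul_and_lt_iff_mul_le {o β γ : Ordinal} (ho : 1 < o) (hβ : 0 < β) :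
    (¬(β < γ * o ∧ γ < β * o) ∧ β < γ) ↔ β * o ≤ γ := by
  constructor
  · rintro ⟨hnot, hlt⟩
    have hβγo : β < γ * o := hlt.trans_le (le_mul_left γ (zero_lt_one.trans ho))
    exact not_lt.1 fun hγβo => hnot ⟨hβγo, hγβo⟩
  · intro hle
    exact ⟨fun ⟨_, hγβo⟩ => hle.not_gt hγβo, (lt_mul_of_one_lt_right hβ ho).trans_le hle⟩

end Ordinal

theorem class_lt_iff_mul_le_general (α β γ : Ordinal) (hβ : 1 ≤ β) :
    ((¬(β < γ * (Cardinal.aleph α).ord ∧ γ < β * (Cardinal.aleph α).ord) ∧ β < γ) ↔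
      β * (Cardinal.aleph α).ord ≤ γ) :=
  Ordinal.not_mutually_lt_mul_and_lt_iff_mul_le (Ordinal.one_lt_ord_aleph α)
    (zero_lt_one.trans_le hβ)

theorem class_lt_iff_mul_le (α β γ : Ordinal) (hβ : 1 ≤ β) (hγ : 1 ≤ γ) :
    ((¬(β < γ * (Cardinal.aleph α).ord ∧ γ < β * (Cardinal.aleph α).ord) ∧ β < γ) ↔
      β * (Cardinal.aleph α).ord ≤ γ) :=
  class_lt_iff_mul_le_general α β γ hβ
end

section
/- Let ℵ_α be an infinite regular cardinal, β an ordinal with β ≤ ℵ_α, and f : β → (ℵ_α + 1) a function (so f(γ) ≤ ℵ_α for all γ < β). Then the transfinite ordinal sum Σ f equals ℵ_α² (ordinal square) if and only if the set {γ < β : f(γ) = ℵ_α} has cardinality ℵ_α. -/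
/-!
Write `O` for the initial ordinal of `κ = ℵ_α`. Bounding every term by `O` gives
`Σ f ≤ O * β ≤ O * O`; when `β < O` the sum is strictly smaller and fewer than `κ` terms can
equal `O`, so let `β = O`. By regularity, the set `S` of indices with `f γ = O` has fewer than `κ`
elements iff it is bounded by some `b < O`. If it is, `Σ f` splits as
`Σ_{γ < b} f γ + Σ_{γ < O} f (b + γ) ≤ O * b + O < O * O`, since a sum of fewer than `κ`
ordinals below `O` stays below `O`. If `S` is unbounded, an induction on `ι < O` finds partial
sums above `O * ι`, each successor step adding a term `f s = O` with `s ∈ S` beyond the previous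
index.
-/

noncomputable def transSum (f : Ordinal → Ordinal) (β : Ordinal) : Ordinal :=
  Ordinal.limitRecOn β 0 (fun γ ih => ih + f γ) (fun γ _ ih => Ordinal.bsup γ (fun δ h => ih δ h))

open Ordinal Cardinal Order Set

section transSum

variable (f : Ordinal.{u} → Ordinal.{u})

theorem transSum_zero : transSum f 0 = 0 :=
  limitRecOn_zero _ _ _

theorem transSum_add_one (γ : Ordinal) : transSum f (γ + 1) = transSum f γ + f γ :=
  limitRecOn_add_one _ _ _ _

set_option linter.deprecated false in
theorem transSum_limit {β : Ordinal} (hβ : IsSuccLimit β) :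
    transSum f β = ⨆ δ : Iio β, transSum f δ := by
  rw [transSum, limitRecOn_limit _ _ _ _ hβ, ← iSup_Iio_eq_bsup]
  rfl

theorem le_transSum_of_lt {β γ : Ordinal} (hβ : IsSuccLimit β) (hγ : γ < β) :
    transSum f γ ≤ transSum f β := by
  rw [transSum_limit f hβ]
  exact Ordinal.le_iSup (fun δ : Iio β => transSum f δ) ⟨γ, hγ⟩

theorem transSum_le_of_isSuccLimit {β a : Ordinal} (hβ : IsSuccLimit β)
    (h : ∀ γ < β, transSum f γ ≤ a) : transSum f β ≤ a := by
  rw [transSum_limit f hβ]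
  exact Ordinal.iSup_le fun δ => h δ δ.2

theorem transSum_mono : Monotone (transSum f) := by
  intro γ β hγβ
  induction β using limitRecOn with
  | zero => rw [nonpos_iff_eq_zero.1 hγβ]
  | add_one β ih =>
    rcases hγβ.lt_or_eq with h | rfl
    · rw [transSum_add_one]
      exact (ih (lt_add_one_iff.1 h)).trans le_self_add
    · rfl
  | limit β hβ _ =>
    rcases hγβ.lt_or_eq with h | rfl
    · exact le_transSum_of_lt f hβ h
    · rfl

theorem transSum_le_transSum {f₁ f₂ : Ordinal.{u} → Ordinal.{u}} {β : Ordinal}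
    (h : ∀ γ < β, f₁ γ ≤ f₂ γ) : transSum f₁ β ≤ transSum f₂ β := by
  induction β using limitRecOn with
  | zero => rw [transSum_zero, transSum_zero]
  | add_one β ih =>
    rw [transSum_add_one, transSum_add_one]
    exact add_le_add (ih fun γ hγ => h γ (hγ.trans (lt_add_one β))) (h β (lt_add_one β))
  | limit β hβ ih =>
    refine transSum_le_of_isSuccLimit f₁ hβ fun γ hγ => ?_
    exact (ih γ hγ fun δ hδ => h δ (hδ.trans hγ)).trans (le_transSum_of_lt f₂ hβ hγ)

theorem transSum_const (c β : Ordinal.{u}) : transSum (fun _ => c) β = c * β := by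
  induction β using limitRecOn with
  | zero => rw [transSum_zero, mul_zero]
  | add_one β ih => rw [transSum_add_one, ih, mul_add_one]
  | limit β hβ ih =>
    refine le_antisymm (transSum_le_of_isSuccLimit _ hβ fun γ hγ => ?_) ?_
    · rw [ih γ hγ]
      exact mul_le_mul_right hγ.le c
    · refine (mul_le_iff_of_isSuccLimit hβ).2 fun γ hγ => ?_
      rw [← ih γ hγ]
      exact le_transSum_of_lt _ hβ hγ

theorem transSum_le_mul {a β : Ordinal.{u}} (h : ∀ γ < β, f γ ≤ a) : transSum f β ≤ a * β :=
  (transSum_le_transSum h).trans_eq (transSum_const a β)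

theorem transSum_add (b γ : Ordinal.{u}) :
    transSum f (b + γ) = transSum f b + transSum (fun δ => f (b + δ)) γ := by
  induction γ using limitRecOn with
  | zero => rw [add_zero, transSum_zero, add_zero]
  | add_one γ ih => rw [← add_assoc, transSum_add_one, transSum_add_one, ih, add_assoc]
  | limit γ hγ ih =>
    refine le_antisymm (transSum_le_of_isSuccLimit f (isSuccLimit_add b hγ) fun δ hδ => ?_) ?_
    · obtain ⟨d, hd, hδd⟩ := (lt_add_iff hγ.ne_bot).1 hδ
      calc transSum f δ ≤ transSum f (b + d) := transSum_mono f hδd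
        _ = transSum f b + transSum (fun δ => f (b + δ)) d := ih d hd
        _ ≤ transSum f b + transSum (fun δ => f (b + δ)) γ :=
          add_le_add le_rfl (le_transSum_of_lt _ hγ hd)
    · have : Nonempty (Iio γ) := ⟨⟨0, hγ.bot_lt⟩⟩
      rw [transSum_limit _ hγ, add_iSup]
      refine Ordinal.iSup_le fun d => ?_
      rw [← ih d d.2]
      exact le_transSum_of_lt f (isSuccLimit_add b hγ) ((add_lt_add_iff_left b).2 d.2)

end transSum

namespace Cardinal.IsRegular

variable {κ : Cardinal.{u}}

theorem iSup_Iio_lt_ord (hκ : κ.IsRegular) {γ : Ordinal.{u}} (hγ : γ < κ.ord)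
    {g : Iio γ → Ordinal.{u}} (hg : ∀ δ, g δ < κ.ord) : ⨆ δ, g δ < κ.ord := by
  apply Ordinal.lift_iSup_lt_of_lt_cof _ hg
  rwa [← lift_cof, hκ.cof_ord, Cardinal.mk_Iio_ordinal, Cardinal.lift_lift, Cardinal.lift_lt,
    ← lt_ord]

theorem transSum_lt_ord (hκ : κ.IsRegular) {f : Ordinal.{u} → Ordinal.{u}} {γ : Ordinal.{u}}
    (hγ : γ < κ.ord) (hf : ∀ δ < γ, f δ < κ.ord) : transSum f γ < κ.ord := by
  induction γ using limitRecOn with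
  | zero => rw [transSum_zero]; exact hκ.ord_pos
  | add_one γ ih =>
    rw [transSum_add_one]
    exact isPrincipal_add_ord hκ.aleph0_le
      (ih ((lt_add_one γ).trans hγ) fun δ hδ => hf δ (hδ.trans (lt_add_one γ)))
      (hf γ (lt_add_one γ))
  | limit γ hγl ih =>
    rw [transSum_limit f hγl]
    exact hκ.iSup_Iio_lt_ord hγ fun δ =>
      ih δ δ.2 (δ.2.trans hγ) fun ε hε => hf ε (hε.trans δ.2)

theorem transSum_ord_lt_ord_mul_ord (hκ : κ.IsRegular) {f : Ordinal.{u} → Ordinal.{u}}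
    {b : Ordinal.{u}} (hb : b < κ.ord) (hf : ∀ γ < κ.ord, f γ ≤ κ.ord)
    (hfb : ∀ γ < κ.ord, f γ = κ.ord → γ < b) : transSum f κ.ord < κ.ord * κ.ord := by
  set O := κ.ord
  have hO := isPrincipal_add_ord hκ.aleph0_le
  have hOlim := isSuccLimit_ord hκ.aleph0_le
  have head : transSum f b ≤ O * b := transSum_le_mul f fun γ hγ => hf γ (hγ.trans hb)
  have tail : transSum (fun δ => f (b + δ)) O ≤ O := by
    refine transSum_le_of_isSuccLimit _ hOlim fun γ hγ => (hκ.transSum_lt_ord hγ fun δ hδ => ?_).le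
    have hbδ : b + δ < O := hO hb (hδ.trans hγ)
    exact (hf _ hbδ).lt_of_ne fun h => (hfb _ hbδ h).not_ge le_self_add
  calc transSum f O = transSum f (b + O) := by rw [hO.add_eq_right hb]
    _ = transSum f b + transSum (fun δ => f (b + δ)) O := transSum_add f b O
    _ ≤ O * b + O := add_le_add head tail
    _ = O * (b + 1) := (mul_add_one O b).symm
    _ < O * O := mul_lt_mul_of_pos_left (hOlim.add_one_lt hb) hκ.ord_pos

theorem ord_mul_ord_le_transSum (hκ : κ.IsRegular) {f : Ordinal.{u} → Ordinal.{u}}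
    (hf : ∀ b < κ.ord, ∃ s < κ.ord, f s = κ.ord ∧ b ≤ s) : κ.ord * κ.ord ≤ transSum f κ.ord := by
  set O := κ.ord
  have hOlim := isSuccLimit_ord hκ.aleph0_le
  suffices h : ∀ ι < O, ∃ γ < O, O * ι ≤ transSum f γ by
    refine (mul_le_iff_of_isSuccLimit hOlim).2 fun ι hι => ?_
    obtain ⟨γ, hγ, hle⟩ := h ι hι
    exact hle.trans (le_transSum_of_lt f hOlim hγ)
  intro ι
  induction ι using limitRecOn with
  | zero => exact fun _ => ⟨0, hκ.ord_pos, by rw [mul_zero]; exact zero_le⟩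
  | add_one ι ih =>
    intro hι
    obtain ⟨γ, hγ, hle⟩ := ih ((lt_add_one ι).trans hι)
    obtain ⟨s, hs, hfs, hγs⟩ := hf γ hγ
    refine ⟨s + 1, hOlim.add_one_lt hs, ?_⟩
    rw [mul_add_one, transSum_add_one, hfs]
    exact add_le_add (hle.trans (transSum_mono f hγs)) le_rfl
  | limit ι hιl ih =>
    intro hι
    choose g hg hle using fun δ : Iio ι => ih δ δ.2 (δ.2.trans hι)
    refine ⟨⨆ δ, g δ, hκ.iSup_Iio_lt_ord hι hg, (mul_le_iff_of_isSuccLimit hιl).2 fun δ hδ => ?_⟩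
    exact (hle ⟨δ, hδ⟩).trans (transSum_mono f (Ordinal.le_iSup g ⟨δ, hδ⟩))

theorem transSum_ord_lt_ord_mul_ord_iff (hκ : κ.IsRegular) {f : Ordinal.{u} → Ordinal.{u}}
    (hf : ∀ γ < κ.ord, f γ ≤ κ.ord) :
    transSum f κ.ord < κ.ord * κ.ord ↔ ∃ b < κ.ord, ∀ γ < κ.ord, f γ = κ.ord → γ < b := by
  refine ⟨fun h => ?_, fun ⟨b, hb, hfb⟩ => hκ.transSum_ord_lt_ord_mul_ord hb hf hfb⟩
  by_contra! hunbounded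
  exact (hκ.ord_mul_ord_le_transSum hunbounded).not_gt h

theorem mk_lt_lift_iff_bounded (hκ : κ.IsRegular) (p : Ordinal.{u} → Prop) :
    #{γ // γ < κ.ord ∧ p γ} < Cardinal.lift.{u + 1} κ ↔
      ∃ b < κ.ord, ∀ γ < κ.ord, p γ → γ < b := by
  constructor
  · intro h
    have hsup : sSup {γ | γ < κ.ord ∧ p γ} < κ.ord := by
      refine sSup_lt_of_lt_cof ?_ fun γ hγ => hγ.1
      rwa [← lift_cof, hκ.cof_ord]
    refine ⟨_, (isSuccLimit_ord hκ.aleph0_le).add_one_lt hsup, fun γ hγ hp => ?_⟩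
    exact lt_add_one_iff.2 (le_csSup ⟨κ.ord, fun x hx => hx.1.le⟩ ⟨hγ, hp⟩)
  · rintro ⟨b, hb, hbound⟩
    calc #{γ // γ < κ.ord ∧ p γ} ≤ #(Iio b) := mk_subtype_mono fun γ hγ => hbound γ hγ.1 hγ.2
      _ = Cardinal.lift b.card := Cardinal.mk_Iio_ordinal b
      _ < Cardinal.lift κ := Cardinal.lift_lt.2 (lt_ord.1 hb)

end Cardinal.IsRegular

theorem mk_subtype_lt_le_lift_card (p : Ordinal.{u} → Prop) (β : Ordinal.{u}) :
    #{γ // γ < β ∧ p γ} ≤ lift.{u + 1} β.card :=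
  (mk_subtype_mono fun _ hγ => hγ.1).trans_eq (Cardinal.mk_Iio_ordinal β)

theorem transSum_eq_sq_iff (α β : Ordinal.{0}) (hreg : (Cardinal.aleph α).IsRegular)
    (hβ : β ≤ (Cardinal.aleph α).ord) (f : Ordinal.{0} → Ordinal.{0})
    (hf : ∀ γ < β, f γ ≤ (Cardinal.aleph α).ord) :
    transSum f β = (Cardinal.aleph α).ord * (Cardinal.aleph α).ord ↔
      Cardinal.mk {γ : Ordinal.{0} // γ < β ∧ f γ = (Cardinal.aleph α).ord} =
        Cardinal.lift.{1} (Cardinal.aleph α) := by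
  set κ := Cardinal.aleph α
  have hupper : transSum f β ≤ κ.ord * κ.ord :=
    (transSum_le_mul f hf).trans (mul_le_mul_right hβ _)
  have hcount := mk_subtype_lt_le_lift_card (fun γ => f γ = κ.ord) β
  rcases hβ.lt_or_eq with hβ | rfl
  · refine iff_of_false ?_ ?_
    · exact ((transSum_le_mul f hf).trans_lt (mul_lt_mul_of_pos_left hβ hreg.ord_pos)).ne
    · exact (hcount.trans_lt (Cardinal.lift_lt.2 (lt_ord.1 hβ))).ne
  · rw [card_ord] at hcount
    rw [← not_iff_not, ← ne_eq, ← ne_eq, ← hupper.lt_iff_ne, ← hcount.lt_iff_ne,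
      hreg.transSum_ord_lt_ord_mul_ord_iff hf, hreg.mk_lt_lift_iff_bounded]
end
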